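/- arXiv:math/9612211 — 3 statements merged into one kernel-verified Lean document; each statement's English description precedes it below -/
import Mathlib

section
/- Let G be a group acting on a set S, and let H and K be subgroups of G with G₀ = H ∩ K. Suppose S_K and S_H are disjoint nonempty subsets of S such that every element of K \ G₀ maps S_K into S_H and every element of H \ G₀ maps S_H into S_K. If h₁, k₁, h₂, k₂, ..., hₙ is an alternating sequence with each hᵢ ∈ H \ G₀ and each kᵢ ∈ K \ G₀ (odd syllable length, beginning and ending with elements of H \ G₀), then the product h₁k₁h₂k₂⋯hₙ is not an element of G₀ (in particular it is nontrivial). -/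
theorem pingpong_aux
    {G S : Type*} [Group G] [MulAction G S]
    (H K : Subgroup G) (G₀ : Subgroup G)
    (SK SH : Set S)
    (hK : ∀ k ∈ K, k ∉ G₀ → ∀ x ∈ SK, k • x ∈ SH)
    (hH : ∀ h ∈ H, h ∉ G₀ → ∀ x ∈ SH, h • x ∈ SK)
    (t : List G) (hodd : Odd t.length)
    (halt : ∀ i : Fin t.length,
      if (i : ℕ) % 2 = 0 then t.get i ∈ H ∧ t.get i ∉ G₀
      else t.get i ∈ K ∧ t.get i ∉ G₀) :
    ∀ x ∈ SH, t.prod • x ∈ SK :=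
  match t, hodd, halt with
  | [], hodd, _ => by simp at hodd
  | [a], _, halt => by
    have h0 := halt ⟨0, by simp⟩
    simp at h0
    intro x hx
    simpa [mul_smul] using hH a h0.1 h0.2 x hx
  | a :: b :: rest, hodd, halt => by
    intro x hx
    have h0 := halt ⟨0, by simp⟩
    have h1 := halt ⟨1, by simp⟩
    simp at h0 h1
    have hrodd : Odd rest.length := by
      obtain ⟨m, hm⟩ := hodd
      simp only [List.length_cons] at hm
      exact ⟨m - 1, by omega⟩
    have hralt : ∀ i : Fin rest.length,
        if (i : ℕ) % 2 = 0 then rest.get i ∈ H ∧ rest.get i ∉ G₀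
        else rest.get i ∈ K ∧ rest.get i ∉ G₀ := by
      intro i
      have := halt ⟨(i : ℕ) + 2, by simp⟩
      have hp : ((i : ℕ) + 2) % 2 = (i : ℕ) % 2 := by omega
      simpa [hp, List.get_cons_succ] using this
    have hy := pingpong_aux H K G₀ SK SH hK hH rest hrodd hralt x hx
    have hz := hK b h1.1 h1.2 _ hy
    have hw := hH a h0.1 h0.2 _ hz
    simpa [mul_smul] using hw

/-- Ping-pong: odd-length alternating products (starting and ending with
elements of `H \ G₀`) are not in `G₀`. -/
theorem pingpong_odd_alternating_product_not_mem
    {G S : Type*} [Group G] [MulAction G S]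
    (H K : Subgroup G) (G₀ : Subgroup G) (hG₀ : G₀ = H ⊓ K)
    (SK SH : Set S) (hSKne : SK.Nonempty) (hSHne : SH.Nonempty)
    (hdisj : Disjoint SK SH)
    (hK : ∀ k ∈ K, k ∉ G₀ → ∀ x ∈ SK, k • x ∈ SH)
    (hH : ∀ h ∈ H, h ∉ G₀ → ∀ x ∈ SH, h • x ∈ SK)
    (l : List G) (hlen : Odd l.length)
    (halt : ∀ i : Fin l.length,
      if (i : ℕ) % 2 = 0 then l.get i ∈ H ∧ l.get i ∉ G₀
      else l.get i ∈ K ∧ l.get i ∉ G₀) :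
    l.prod ∉ G₀ := by
  match l, hlen, halt with
  | [], hlen, _ => simp at hlen
  | [a], _, halt =>
    have h0 := halt ⟨0, by simp⟩
    simp at h0 ⊢
    exact h0.2
  | a :: b :: rest, hlen, halt =>
    intro hg
    have h0 := halt ⟨0, by simp⟩
    have h1 := halt ⟨1, by simp⟩
    simp at h0 h1
    have hrodd : Odd rest.length := by
      obtain ⟨m, hm⟩ := hlen
      simp only [List.length_cons] at hm
      exact ⟨m - 1, by omega⟩
    have hralt : ∀ i : Fin rest.length,
        if (i : ℕ) % 2 = 0 then rest.get i ∈ H ∧ rest.get i ∉ G₀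
        else rest.get i ∈ K ∧ rest.get i ∉ G₀ := by
      intro i
      have := halt ⟨(i : ℕ) + 2, by simp⟩
      have hp : ((i : ℕ) + 2) % 2 = (i : ℕ) % 2 := by omega
      simpa [hp, List.get_cons_succ] using this
    obtain ⟨x, hx⟩ := hSHne
    have hy := pingpong_aux H K G₀ SK SH hK hH rest hrodd hralt x hx
    have hz := hK b h1.1 h1.2 _ hy
    -- u = a⁻¹ * prod = b * rest.prod
    set u : G := a⁻¹ * (a :: b :: rest).prod with hu
    have hux : u • x = b • (rest.prod • x) := by
      simp [hu, List.prod_cons, mul_smul]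
    have huH : u ∈ H := by
      have hgH : (a :: b :: rest).prod ∈ H := by
        rw [hG₀] at hg; exact hg.1
      exact H.mul_mem (H.inv_mem h0.1) hgH
    have huG₀ : u ∉ G₀ := by
      intro huG
      have ha : a = (a :: b :: rest).prod * u⁻¹ := by rw [hu]; group
      exact h0.2 (ha ▸ G₀.mul_mem hg (G₀.inv_mem huG))
    have hSK : u • x ∈ SK := hH u huH huG₀ x hx
    rw [hux] at hSK
    exact hdisj.ne_of_mem hSK hz rfl
end

section
/- Ping-Pong Lemma with amalgamation: Let G be a group acting on a set S, H and K subgroups of G with G₀ = H ∩ K, and suppose the index of G₀ in H is greater than 2 (i.e., there exist at least three distinct left cosets of G₀ in H). If there exist disjoint nonempty subsets S_K and S_H of S such that every element of K \ G₀ maps S_K into S_H and every element of H \ G₀ maps S_H into S_K, then every alternating product h₁k₁⋯hₙkₙ or k₁h₁⋯kₙhₙ or h₁k₁⋯hₙ or k₁h₁⋯kₙ with all factors outside G₀ is nontrivial in G. Consequently the canonical map from the amalgamated free product H *_{G₀} K to G (induced by the inclusions of H and K) is injective, so ⟨H, K⟩ ≅ H *_{G₀} K. -/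
variable {G : Type*} [Group G]

/-- The two-element family of groups `H`, `K` (as an indexed family over `Bool`). -/
def pairFam (H K : Subgroup G) : Bool → Type _
  | true => ↥H
  | false => ↥K

instance pairFamGroup (H K : Subgroup G) : ∀ b, Group (pairFam H K b)
  | true => by unfold pairFam; infer_instance
  | false => by unfold pairFam; infer_instance

/-- The inclusions of `G₀ = H ⊓ K` into `H` and `K`. -/
def pairIncl (H K : Subgroup G) : ∀ b, ↥(H ⊓ K) →* pairFam H K b
  | true => Subgroup.inclusion inf_le_left
  | false => Subgroup.inclusion inf_le_right

/-- The maps from `H` and `K` back into `G`. -/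
def pairSub (H K : Subgroup G) : ∀ b, pairFam H K b →* G
  | true => H.subtype
  | false => K.subtype

theorem pairSub_comp (H K : Subgroup G) :
    ∀ b, (pairSub H K b).comp (pairIncl H K b) = (H ⊓ K).subtype := by
  intro b; cases b <;> rfl

namespace PingPongAux


variable {G : Type*} [Group G]

def bflip (b : Bool) (n : ℕ) : Bool := if n % 2 = 0 then b else !b

theorem bflip_zero (b : Bool) : bflip b 0 = b := rfl

theorem bflip_of_even {n : ℕ} (h : n % 2 = 0) (b : Bool) : bflip b n = b := if_pos h

theorem bflip_of_odd {n : ℕ} (h : n % 2 = 1) (b : Bool) : bflip b n = !b :=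
  if_neg (by omega)

theorem bflip_succ (b : Bool) (n : ℕ) : bflip b (n + 1) = bflip (!b) n := by
  rcases Nat.mod_two_eq_zero_or_one n with h | h
  · rw [bflip_of_even h, bflip_of_odd (by omega)]
  · rw [bflip_of_odd h, bflip_of_even (by omega), Bool.not_not]

theorem bflip_bflip (b : Bool) (n : ℕ) : bflip (bflip b n) n = b := by
  rcases Nat.mod_two_eq_zero_or_one n with h | h
  · rw [bflip_of_even h, bflip_of_even h]
  · rw [bflip_of_odd h, bflip_of_odd h, Bool.not_not]

/-- `g` is a syllable of type `b` (`true` = `H`, `false` = `K`) outside `G₀ = H ⊓ K`. -/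
def inTy (H K : Subgroup G) (b : Bool) (g : G) : Prop :=
  g ∈ (cond b H K) ∧ g ∉ H ⊓ K

/-- Alternating word, starting with type `b`. -/
def Alt (H K : Subgroup G) : Bool → List G → Prop
  | _, [] => True
  | b, g :: t => inTy H K b g ∧ Alt H K (!b) t

theorem inTy_inv {H K : Subgroup G} {b : Bool} {g : G} (h : inTy H K b g) :
    inTy H K b g⁻¹ := by
  refine ⟨inv_mem h.1, fun hg => h.2 ?_⟩
  simpa using inv_mem hg

theorem alt_append {H K : Subgroup G} (g : G) :
    ∀ (t : List G) (b : Bool), Alt H K b t →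
      inTy H K (bflip b t.length) g → Alt H K b (t ++ [g])
  | [], b, _, hg => ⟨hg, trivial⟩
  | g' :: t, b, hA, hg => by
    rw [List.length_cons, bflip_succ] at hg
    exact ⟨hA.1, alt_append g t (!b) hA.2 hg⟩

theorem alt_revInv {H K : Subgroup G} :
    ∀ (l : List G) (b : Bool), Alt H K b l →
      Alt H K (bflip (!b) l.length) ((l.map (·⁻¹)).reverse)
  | [], b, _ => trivial
  | g :: t, b, hA => by
    have ih := alt_revInv t (!b) hA.2
    rw [Bool.not_not] at ih
    rw [List.length_cons, bflip_succ, Bool.not_not]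
    simp only [List.map_cons, List.reverse_cons]
    refine alt_append g⁻¹ _ _ ih ?_
    have hlen : ((t.map (·⁻¹)).reverse).length = t.length := by simp
    rw [hlen, bflip_bflip]
    exact inTy_inv hA.1

variable {S : Type*} [MulAction G S] {H K : Subgroup G} {SK SH : Set S}

theorem ping (hK : ∀ k ∈ K, k ∉ H ⊓ K → ∀ x ∈ SK, k • x ∈ SH)
    (hH : ∀ h ∈ H, h ∉ H ⊓ K → ∀ x ∈ SH, h • x ∈ SK) :
    ∀ (l : List G) (b : Bool), Alt H K b l → ∀ x : S,
      x ∈ cond (bflip b l.length) SK SH → l.prod • x ∈ cond b SK SH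
  | [], _, _, x, hx => by rw [List.prod_nil, one_smul]; exact hx
  | g :: t, b, hA, x, hx => by
    rw [List.length_cons, bflip_succ] at hx
    have ih := ping hK hH t (!b) hA.2 x hx
    rw [List.prod_cons, mul_smul]
    cases b with
    | true => exact hH g hA.1.1 hA.1.2 _ ih
    | false => exact hK g hA.1.1 hA.1.2 _ ih

theorem ne_one_odd (hSKne : SK.Nonempty) (hSHne : SH.Nonempty) (hdisj : Disjoint SK SH)
    (hK : ∀ k ∈ K, k ∉ H ⊓ K → ∀ x ∈ SK, k • x ∈ SH)
    (hH : ∀ h ∈ H, h ∉ H ⊓ K → ∀ x ∈ SH, h • x ∈ SK)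
    {l : List G} {b : Bool} (hA : Alt H K b l) (hodd : l.length % 2 = 1) :
    l.prod ≠ 1 := by
  intro h1
  cases b with
  | true =>
    obtain ⟨x, hx⟩ := hSHne
    have := ping hK hH l true hA x (by rw [bflip_of_odd hodd]; exact hx)
    rw [h1, one_smul] at this
    exact Set.disjoint_left.1 hdisj this hx
  | false =>
    obtain ⟨x, hx⟩ := hSKne
    have := ping hK hH l false hA x (by rw [bflip_of_odd hodd]; exact hx)
    rw [h1, one_smul] at this
    exact Set.disjoint_left.1 hdisj hx this

theorem ne_one_true_even
    (hindex : ∀ h₁ ∈ H, ∃ h ∈ H, h ∉ H ⊓ K ∧ h⁻¹ * h₁ ∉ H ⊓ K)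
    (hSKne : SK.Nonempty) (hSHne : SH.Nonempty) (hdisj : Disjoint SK SH)
    (hK : ∀ k ∈ K, k ∉ H ⊓ K → ∀ x ∈ SK, k • x ∈ SH)
    (hH : ∀ h ∈ H, h ∉ H ⊓ K → ∀ x ∈ SH, h • x ∈ SK)
    {l : List G} (hA : Alt H K true l) (hne : l ≠ []) (heven : l.length % 2 = 0) :
    l.prod ≠ 1 := by
  match l, hne with
  | h₁ :: t, _ =>
    obtain ⟨⟨hmem, hnot⟩, hAt⟩ := hA
    have hmem' : h₁ ∈ H := hmem
    obtain ⟨h, hhH, hhG, hhinv⟩ := hindex h₁ hmem'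
    have htodd : t.length % 2 = 1 := by
      rw [List.length_cons] at heven; omega
    have hAt' : Alt H K false (t ++ [h]) := by
      refine alt_append h t false hAt ?_
      rw [bflip_of_odd htodd]
      exact ⟨hhH, hhG⟩
    have hA' : Alt H K true ((h⁻¹ * h₁) :: (t ++ [h])) :=
      ⟨⟨mul_mem (inv_mem hhH) hmem', hhinv⟩, hAt'⟩
    have hodd' : ((h⁻¹ * h₁) :: (t ++ [h])).length % 2 = 1 := by
      simp only [List.length_cons, List.length_append, List.length_cons, List.length_nil]
      omega
    have hne1 := ne_one_odd hSKne hSHne hdisj hK hH hA' hodd'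
    intro hcontra
    apply hne1
    rw [List.prod_cons, List.prod_append, List.prod_singleton]
    rw [List.prod_cons] at hcontra
    rw [← inv_eq_of_mul_eq_one_right hcontra]
    group

theorem ne_one (hindex : ∀ h₁ ∈ H, ∃ h ∈ H, h ∉ H ⊓ K ∧ h⁻¹ * h₁ ∉ H ⊓ K)
    (hSKne : SK.Nonempty) (hSHne : SH.Nonempty) (hdisj : Disjoint SK SH)
    (hK : ∀ k ∈ K, k ∉ H ⊓ K → ∀ x ∈ SK, k • x ∈ SH)
    (hH : ∀ h ∈ H, h ∉ H ⊓ K → ∀ x ∈ SH, h • x ∈ SK)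
    {l : List G} {b : Bool} (hA : Alt H K b l) (hne : l ≠ []) :
    l.prod ≠ 1 := by
  rcases Nat.mod_two_eq_zero_or_one l.length with heven | hodd
  · cases b with
    | true => exact ne_one_true_even hindex hSKne hSHne hdisj hK hH hA hne heven
    | false =>
      have hr := alt_revInv l false hA
      rw [bflip_of_even heven, Bool.not_false] at hr
      have hrne : (l.map (·⁻¹)).reverse ≠ [] := by simpa using hne
      have hrlen : ((l.map (·⁻¹)).reverse).length % 2 = 0 := by simpa using heven
      have hne1 := ne_one_true_even hindex hSKne hSHne hdisj hK hH hr hrne hrlen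
      intro h1
      apply hne1
      rw [← List.prod_inv_reverse, h1, inv_one]
  · exact ne_one_odd hSKne hSHne hdisj hK hH hA hodd


theorem mem_range_of_val_mem {H K : Subgroup G} :
    ∀ (b : Bool) (g : pairFam H K b), (pairSub H K b) g ∈ H ⊓ K →
      g ∈ (pairIncl H K b).range
  | true, g, hm => ⟨⟨H.subtype g, hm⟩, Subtype.ext rfl⟩
  | false, g, hm => ⟨⟨K.subtype g, hm⟩, Subtype.ext rfl⟩

theorem lift_word_prod {H K : Subgroup G} :
    ∀ lst : List (Σ b : Bool, pairFam H K b),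
      (Monoid.PushoutI.lift (pairSub H K) (H ⊓ K).subtype (pairSub_comp H K))
        (Monoid.PushoutI.ofCoprodI
          (List.prod (lst.map fun p => Monoid.CoprodI.of p.2)))
        = (lst.map fun p => (pairSub H K p.1) p.2).prod
  | [] => by simp
  | p :: t => by
    simp only [List.map_cons, List.prod_cons, map_mul, Monoid.PushoutI.ofCoprodI_of,
      Monoid.PushoutI.lift_of]
    rw [lift_word_prod t]

theorem alt_of_forall {H K : Subgroup G} :
    ∀ (l : List G) (b : Bool),
      (∀ i : Fin l.length, inTy H K (bflip b (i : ℕ)) (l.get i)) → Alt H K b l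
  | [], _, _ => trivial
  | g :: t, b, hc => by
    refine ⟨by simpa [bflip_zero] using hc ⟨0, by simp⟩,
      alt_of_forall t (!b) fun i => ?_⟩
    have := hc ⟨(i : ℕ) + 1, by simpa using i.isLt⟩
    rwa [bflip_succ, List.get_cons_succ] at this

theorem alt_of_get {H K : Subgroup G} (l : List G) (b : Bool)
    (h : ∀ i : Fin l.length, if (i : ℕ) % 2 = 0
        then l.get i ∈ (cond b H K) ∧ l.get i ∉ H ⊓ K
        else l.get i ∈ (cond b K H) ∧ l.get i ∉ H ⊓ K) : Alt H K b l := by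
  refine alt_of_forall l b fun i => ?_
  have hi := h i
  rcases Nat.mod_two_eq_zero_or_one (i : ℕ) with hp | hp
  · rw [if_pos hp] at hi; rw [bflip_of_even hp]; exact hi
  · rw [if_neg (by omega)] at hi; rw [bflip_of_odd hp]
    cases b
    · exact hi
    · exact hi

theorem alt_of_chain {H K : Subgroup G} :
    ∀ (lst : List (Σ b : Bool, pairFam H K b)) (b : Bool),
      lst.Chain' (fun p q => p.1 ≠ q.1) →
      (∀ p ∈ lst, ((pairSub H K p.1) p.2 : G) ∉ H ⊓ K) →
      (∀ p ∈ lst.head?, p.1 = b) →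
      Alt H K b (lst.map fun p => (pairSub H K p.1) p.2)
  | [], _, _, _, _ => trivial
  | p :: t, b, hch, hG, hb => by
    have hpb : p.1 = b := hb p rfl
    simp only [List.Chain', List.isChain_cons] at hch
    refine ⟨⟨?_, hG p List.mem_cons_self⟩,
      alt_of_chain t (!b) hch.2 (fun q hq => hG q (List.mem_cons_of_mem _ hq))
        (fun q hq => ?_)⟩
    · subst hpb
      obtain ⟨b', x⟩ := p
      cases b'
      · exact x.2
      · exact x.2
    · have hne := hch.1 q hq
      subst hpb
      cases hqq : q.1 <;> cases hpp : p.1 <;> simp_all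

end PingPongAux

open PingPongAux

/-- Ping-Pong Lemma with amalgamation: under the ping-pong hypotheses and
`[H : G₀] > 2`, every nonempty alternating product with syllables outside
`G₀ = H ⊓ K` is nontrivial, and the canonical homomorphism from the
amalgamated free product `H *_{G₀} K` (the pushout of the inclusions) to `G`
is injective. -/
theorem pingpong_amalgamated_product
    {S : Type*} [MulAction G S] (H K : Subgroup G)
    (hindex : ∀ h₁ ∈ H, ∃ h ∈ H, h ∉ H ⊓ K ∧ h⁻¹ * h₁ ∉ H ⊓ K)
    (SK SH : Set S) (hSKne : SK.Nonempty) (hSHne : SH.Nonempty)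
    (hdisj : Disjoint SK SH)
    (hK : ∀ k ∈ K, k ∉ H ⊓ K → ∀ x ∈ SK, k • x ∈ SH)
    (hH : ∀ h ∈ H, h ∉ H ⊓ K → ∀ x ∈ SH, h • x ∈ SK) :
    (∀ l : List G, l ≠ [] →
      ((∀ i : Fin l.length, if (i : ℕ) % 2 = 0
          then l.get i ∈ H ∧ l.get i ∉ H ⊓ K
          else l.get i ∈ K ∧ l.get i ∉ H ⊓ K) ∨
       (∀ i : Fin l.length, if (i : ℕ) % 2 = 0
          then l.get i ∈ K ∧ l.get i ∉ H ⊓ K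
          else l.get i ∈ H ∧ l.get i ∉ H ⊓ K)) →
      l.prod ≠ 1) ∧
    Function.Injective
      (Monoid.PushoutI.lift (pairSub H K) (H ⊓ K).subtype (pairSub_comp H K)) := by
  constructor
  · intro l hne hcond
    rcases hcond with hc | hc
    · exact ne_one hindex hSKne hSHne hdisj hK hH (alt_of_get l true hc) hne
    · exact ne_one hindex hSKne hSHne hdisj hK hH (alt_of_get l false hc) hne
  · have hφinj : ∀ b, Function.Injective (pairIncl H K b) := by
      intro b
      cases b
      · exact Subgroup.inclusion_injective inf_le_right
      · exact Subgroup.inclusion_injective inf_le_left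
    obtain ⟨d⟩ := Monoid.PushoutI.NormalWord.transversal_nonempty (pairIncl H K) hφinj
    rw [injective_iff_map_eq_one]
    intro x hx
    classical
    set w : Monoid.PushoutI.NormalWord d := x • Monoid.PushoutI.NormalWord.empty with hw
    have hprod : w.prod = x := by
      rw [hw, Monoid.PushoutI.NormalWord.prod_smul, Monoid.PushoutI.NormalWord.prod_empty,
        mul_one]
    set L : List G := w.toList.map fun p => (pairSub H K p.1) p.2 with hLdef
    have hfx : (w.head : G) * L.prod = 1 := by
      have h1 : Monoid.PushoutI.lift (pairSub H K) (H ⊓ K).subtype (pairSub_comp H K)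
          w.prod = 1 := by rw [hprod]; exact hx
      rw [show w.prod = Monoid.PushoutI.base (pairIncl H K) w.head *
            Monoid.PushoutI.ofCoprodI w.toWord.prod from rfl] at h1
      rw [map_mul, Monoid.PushoutI.lift_base] at h1
      rw [show w.toWord.prod =
            (w.toList.map fun p => Monoid.CoprodI.of p.2).prod from rfl] at h1
      rw [lift_word_prod] at h1
      rw [hLdef]
      exact h1
    have hnotG : ∀ p ∈ w.toList, ((pairSub H K p.1) p.2 : G) ∉ H ⊓ K := by
      intro p hp
      have hset : p.2 ∈ d.set p.1 := w.normalized p.1 p.2 hp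
      have hne1 : p.2 ≠ 1 := w.toWord.ne_one p hp
      have hrange : p.2 ∉ (pairIncl H K p.1).range := by
        intro hr
        apply hne1
        obtain ⟨u, _, hu2⟩ := (d.compl p.1).existsUnique p.2
        have h1 : (⟨⟨p.2, hr⟩, ⟨1, d.one_mem p.1⟩⟩ :
            ((pairIncl H K p.1).range : Set (pairFam H K p.1)) × d.set p.1) = u :=
          hu2 _ (by simp)
        have h2 : (⟨⟨1, Subgroup.one_mem _⟩, ⟨p.2, hset⟩⟩ :
            ((pairIncl H K p.1).range : Set (pairFam H K p.1)) × d.set p.1) = u :=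
          hu2 _ (by simp)
        have h3 := h1.trans h2.symm
        have h4 := congrArg (fun z => (z.2 : pairFam H K p.1)) h3
        simpa using h4.symm
      intro hmem
      exact hrange (mem_range_of_val_mem p.1 p.2 hmem)
    have hchain := w.toWord.chain_ne
    rcases hLl : w.toList with _ | ⟨⟨pb, pg⟩, rest⟩
    · have hL' : L = [] := by rw [hLdef, hLl]; rfl
      rw [hL', List.prod_nil, mul_one] at hfx
      have hhead : w.head = 1 := by
        apply Subtype.ext; simpa using hfx
      rw [← hprod, show w.prod = Monoid.PushoutI.base (pairIncl H K) w.head *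
            Monoid.PushoutI.ofCoprodI w.toWord.prod from rfl, hhead,
        show w.toWord.prod =
            (w.toList.map fun p => Monoid.CoprodI.of p.2).prod from rfl, hLl]
      simp
    · exfalso
      have hL' : L = ((pairSub H K pb) pg) ::
          (rest.map fun q => (pairSub H K q.1) q.2) := by
        rw [hLdef, hLl]; rfl
      have hAlt : Alt H K pb L := by
        rw [hLdef, hLl]
        refine alt_of_chain (⟨pb, pg⟩ :: rest) pb ?_ ?_ ?_
        · rw [← hLl]; exact hchain
        · rw [← hLl]; exact hnotG
        · intro q hq
          simp only [List.head?_cons, Option.mem_def, Option.some.injEq] at hq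
          rw [← hq]
      rw [hL'] at hAlt
      obtain ⟨hty, hAt⟩ := hAlt
      have hcG : (w.head : G) ∈ H ⊓ K := w.head.2
      have hA2 : Alt H K pb (((w.head : G) * (pairSub H K pb) pg) ::
          (rest.map fun q => (pairSub H K q.1) q.2)) := by
        refine ⟨⟨?_, fun hcg => hty.2 ?_⟩, hAt⟩
        · cases pb
          · exact mul_mem hcG.2 hty.1
          · exact mul_mem hcG.1 hty.1
        · have := mul_mem (inv_mem hcG) hcg
          rwa [inv_mul_cancel_left] at this
      have hne2 := ne_one hindex hSKne hSHne hdisj hK hH hA2 (by simp)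
      apply hne2
      rw [List.prod_cons, mul_assoc, ← List.prod_cons, ← hL']
      exact hfx
end

section
/- In the setting of the ping-pong lemma, if an alternating product of even syllable length h₁k₁⋯hₙkₙ (all hᵢ ∈ H \ G₀, all kᵢ ∈ K \ G₀) equals 1 in G, and there exists h ∈ H with h ∉ G₀ and h⁻¹h₁ ∉ G₀, then the conjugated product h⁻¹h₁k₁⋯hₙkₙh is an alternating product of odd syllable length with all syllables outside G₀, hence is nontrivial by the odd-length case — a contradiction. Therefore every even-length alternating product with all syllables outside G₀ is nontrivial. -/
/-- Odd-length alternating products starting and ending with `H`-syllables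
map `SH` into `SK`. -/
theorem pingpong_odd_aux
    {G S : Type*} [Group G] [MulAction G S]
    (H K : Subgroup G) (G₀ : Subgroup G)
    (SK SH : Set S)
    (hK : ∀ k ∈ K, k ∉ G₀ → ∀ x ∈ SK, k • x ∈ SH)
    (hH : ∀ h ∈ H, h ∉ G₀ → ∀ x ∈ SH, h • x ∈ SK) :
    ∀ (l : List G),
      (∀ i (hi : i < l.length),
        if i % 2 = 0 then l[i] ∈ H ∧ l[i] ∉ G₀ else l[i] ∈ K ∧ l[i] ∉ G₀) →
      Odd l.length → ∀ x ∈ SH, l.prod • x ∈ SK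
  | [] => by intro _ hodd; simp at hodd
  | [a] => by
      intro halt _ x hx
      have h0 := halt 0 (by simp)
      simp only [Nat.zero_mod, if_pos rfl] at h0
      simpa using hH a h0.1 h0.2 x hx
  | a :: b :: rest => by
      intro halt hodd x hx
      have ih := pingpong_odd_aux H K G₀ SK SH hK hH rest
        (fun i hi => by
          have := halt (i + 2) (by simpa using Nat.add_lt_add_right hi 2)
          have hmod : (i + 2) % 2 = i % 2 := by omega
          simpa [hmod] using this)
        (by
          rcases hodd with ⟨m, hm⟩
          simp only [List.length_cons] at hm
          exact ⟨m - 1, by omega⟩)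
        x hx
      have h0 := halt 0 (by simp)
      simp only [Nat.zero_mod, if_pos rfl] at h0
      have h1 := halt 1 (by simp)
      norm_num at h1
      have hb : b • (rest.prod • x) ∈ SH := hK b h1.1 h1.2 _ ih
      have ha : a • (b • (rest.prod • x)) ∈ SK := hH a h0.1 h0.2 _ hb
      simpa [List.prod_cons, mul_smul] using ha

/-- Ping-pong: even-length alternating products `h₁k₁⋯hₙkₙ` with all syllables
outside `G₀` are nontrivial, given that `[H : G₀] > 2` in the sense that every
`h₁ ∈ H \ G₀` admits `h ∈ H \ G₀` with `h⁻¹h₁ ∉ G₀`. -/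
theorem pingpong_even_alternating_product_ne_one
    {G S : Type*} [Group G] [MulAction G S]
    (H K : Subgroup G) (G₀ : Subgroup G) (hG₀ : G₀ = H ⊓ K)
    (SK SH : Set S) (hSKne : SK.Nonempty) (hSHne : SH.Nonempty)
    (hdisj : Disjoint SK SH)
    (hK : ∀ k ∈ K, k ∉ G₀ → ∀ x ∈ SK, k • x ∈ SH)
    (hH : ∀ h ∈ H, h ∉ G₀ → ∀ x ∈ SH, h • x ∈ SK)
    (hindex : ∀ h₁ ∈ H, h₁ ∉ G₀ → ∃ h ∈ H, h ∉ G₀ ∧ h⁻¹ * h₁ ∉ G₀)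
    (l : List G) (hlen : Even l.length) (hne : l ≠ [])
    (halt : ∀ i : Fin l.length,
      if (i : ℕ) % 2 = 0 then l.get i ∈ H ∧ l.get i ∉ G₀
      else l.get i ∈ K ∧ l.get i ∉ G₀) :
    l.prod ≠ 1 := by
  have halt' : ∀ i (hi : i < l.length),
      if i % 2 = 0 then l[i] ∈ H ∧ l[i] ∉ G₀ else l[i] ∈ K ∧ l[i] ∉ G₀ :=
    fun i hi => halt ⟨i, hi⟩
  obtain ⟨a, t, rfl⟩ : ∃ a t, l = a :: t := by
    cases l with
    | nil => exact absurd rfl hne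
    | cons a t => exact ⟨a, t, rfl⟩
  have h0 := halt' 0 (by simp)
  simp only [Nat.zero_mod, if_pos rfl, List.getElem_cons_zero] at h0
  obtain ⟨h, hhH, hhG₀, hinv⟩ := hindex a h0.1 h0.2
  intro hprod
  set l' : List G := (h⁻¹ * a) :: (t ++ [h]) with hl'
  have hlenl : (a :: t).length = t.length + 1 := by simp
  have htodd : t.length % 2 = 1 := by
    rcases hlen with ⟨m, hm⟩
    simp only [List.length_cons] at hm
    omega
  have halt'' : ∀ i (hi : i < l'.length),
      if i % 2 = 0 then l'[i] ∈ H ∧ l'[i] ∉ G₀ else l'[i] ∈ K ∧ l'[i] ∉ G₀ := by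
    intro i hi
    match i with
    | 0 => simpa using ⟨H.mul_mem (H.inv_mem hhH) h0.1, hinv⟩
    | (j + 1) =>
      have hj : j < t.length + 1 := by simpa [hl'] using hi
      rcases lt_or_eq_of_le (Nat.lt_succ_iff.mp hj) with hjt | hjt
      · have := halt' (j + 1) (by simpa using Nat.add_lt_add_right hjt 1)
        have he : l'[j+1]'hi = t[j]'hjt := by
          simp [hl', List.getElem_cons_succ, List.getElem_append, hjt]
        rw [he]
        simpa [List.getElem_cons_succ] using this
      · have he : l'[j+1]'hi = h := by
          subst hjt
          simp [hl', List.getElem_cons_succ, List.getElem_append_right]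
        have hm : (j + 1) % 2 = 0 := by omega
        rw [he, if_pos hm]
        exact ⟨hhH, hhG₀⟩
  have hodd' : Odd l'.length := by
    have hle : l'.length = t.length + 2 := by simp [hl']
    rw [Nat.odd_iff, hle]
    omega
  obtain ⟨x, hx⟩ := hSHne
  have hxK : l'.prod • x ∈ SK :=
    pingpong_odd_aux H K G₀ SK SH hK hH l' halt'' hodd' x hx
  have hp : l'.prod = 1 := by
    have h1 : a * t.prod = 1 := by simpa [List.prod_cons] using hprod
    have : l'.prod = h⁻¹ * (a * t.prod) * h := by
      simp only [hl', List.prod_cons, List.prod_append, List.prod_singleton,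
        List.prod_nil, mul_one]
      group
    rw [this, h1]
    group
  rw [hp, one_smul] at hxK
  exact (Set.disjoint_right.mp hdisj hx) hxK
end
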